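/- Let θ ∈ (0, π/2), let k ∈ ℕ, and let η : ℝ → ℂ be infinitely differentiable with compact support contained in (0,∞). Then there exists a constant C > 0 such that for every M ≥ 0, every function F : ℂ → ℂ that is complex differentiable on Σ_θ° with |F(z)| ≤ M for all z ∈ Σ_θ°, every t > 0, and every j ∈ {0,…,k}, the function G_t : ℝ → ℂ, G_t(s) := η(s)·F(t·s), is k-times differentiable on ℝ and its j-th derivative satisfies ‖G_t^{(j)}‖_{L²(ℝ)} ≤ C·M. (Thus bounded holomorphic functions on a sector satisfy the Hörmander condition sup_{t>0} ‖η(·)F(t·)‖_{W^{k,2}(ℝ)} ≲ sup_{Σ_θ°}|F|.) -/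

import Mathlib

/-!
Dilating `F` by `t > 0` preserves holomorphy and the bound `M` on the sector, so it suffices to
take `t = 1`. The support of `η` lies in `[a, ∞)` for some `a > 0`, and the discs of a fixed
radius `r > 0` around such points stay inside `Σ_θ°`, so Cauchy's estimates bound the derivatives
of `F` there by `n! M / rⁿ`, uniformly. The Leibniz rule then bounds `(η F)⁽ʲ⁾` pointwise by a
constant times `M` on the compact support of `η`, which yields the `L²` bound.
-/

open Real MeasureTheory

/-- The open sector `Σ_θ° = {z ≠ 0 : |arg z| < θ}`. -/
def openSector (θ : ℝ) : Set ℂ := {z : ℂ | z ≠ 0 ∧ |Complex.arg z| < θ}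

open Complex in
theorem isOpen_openSector {θ : ℝ} (hθ : θ ≤ π) : IsOpen (openSector θ) := by
  have : openSector θ = slitPlane ∩ arg ⁻¹' Set.Ioo (-θ) θ := by
    ext z
    simp only [openSector, Set.mem_ofPred_eq, Set.mem_inter_iff, mem_slitPlane_iff_arg,
      Set.mem_preimage, Set.mem_Ioo, ← abs_lt]
    constructor
    · rintro ⟨hz, harg⟩
      exact ⟨⟨fun h => by rw [h, abs_of_pos pi_pos] at harg; linarith, hz⟩, harg⟩
    · rintro ⟨⟨-, hz⟩, harg⟩
      exact ⟨hz, harg⟩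
  rw [this]
  exact continuousOn_arg.isOpen_inter_preimage isOpen_slitPlane isOpen_Ioo

theorem ofReal_mem_openSector {θ x : ℝ} (hθ : 0 < θ) (hx : 0 < x) : (x : ℂ) ∈ openSector θ :=
  ⟨by exact_mod_cast hx.ne', by rwa [Complex.arg_ofReal_of_nonneg hx.le, abs_zero]⟩

theorem ofReal_mul_mem_openSector {θ t : ℝ} {z : ℂ} (ht : 0 < t) (hz : z ∈ openSector θ) :
    (t : ℂ) * z ∈ openSector θ :=
  ⟨mul_ne_zero (by exact_mod_cast ht.ne') hz.1, by rw [Complex.arg_real_mul z ht]; exact hz.2⟩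

theorem mem_openSector_of_abs_im_lt {θ : ℝ} (hθ0 : 0 < θ) (hθ : θ ≤ π / 2) {z : ℂ}
    (hre : 0 < z.re) (him : |z.im| < sin θ * ‖z‖) : z ∈ openSector θ := by
  have hz : z ≠ 0 := fun h => by simp [h] at hre
  have hnorm : 0 < ‖z‖ := norm_pos_iff.mpr hz
  have hθmem : θ ∈ Set.Icc (-(π / 2)) (π / 2) := ⟨by linarith, hθ⟩
  have hnegθmem : -θ ∈ Set.Icc (-(π / 2)) (π / 2) := ⟨by linarith, by linarith⟩
  have hsin : |z.im / ‖z‖| < sin θ := by rwa [abs_div, abs_norm, div_lt_iff₀ hnorm]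
  have hsin' := abs_lt.mp hsin
  have hmem : z.im / ‖z‖ ∈ Set.Icc (-1 : ℝ) 1 :=
    ⟨by linarith [sin_le_one θ], by linarith [sin_le_one θ]⟩
  refine ⟨hz, ?_⟩
  rw [Complex.arg_of_re_nonneg hre.le, abs_lt]
  exact ⟨(lt_arcsin_iff_sin_lt hnegθmem hmem).mpr (by rw [sin_neg]; exact hsin'.1),
    (arcsin_lt_iff_lt_sin hmem hθmem).mpr hsin'.2⟩

theorem closedBall_subset_openSector {θ : ℝ} (hθ0 : 0 < θ) (hθ : θ ≤ π / 2) {x r : ℝ}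
    (hr : r < sin θ * (x - r)) : Metric.closedBall (x : ℂ) r ⊆ openSector θ := by
  intro z hz
  rw [Metric.mem_closedBall, Complex.dist_eq] at hz
  have hsin : 0 < sin θ := sin_pos_of_pos_of_lt_pi hθ0 (by linarith [pi_pos])
  have hxr : 0 < x - r := by
    by_contra! h
    nlinarith [norm_nonneg (z - x)]
  have hre : x - r ≤ z.re := by
    have := (abs_le.mp ((Complex.abs_re_le_norm (z - x)).trans hz)).1
    simp only [Complex.sub_re, Complex.ofReal_re] at this
    linarith
  have him : |z.im| ≤ r := by
    simpa using (Complex.abs_im_le_norm (z - x)).trans hz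
  have hnorm : x - r ≤ ‖z‖ := hre.trans (Complex.re_le_norm z)
  refine mem_openSector_of_abs_im_lt hθ0 hθ (by linarith) ?_
  calc |z.im| ≤ r := him
    _ < sin θ * (x - r) := hr
    _ ≤ sin θ * ‖z‖ := by gcongr

theorem exists_pos_closedBall_subset_openSector {θ : ℝ} (hθ0 : 0 < θ) (hθ : θ ≤ π / 2) {a : ℝ}
    (ha : 0 < a) : ∃ r > 0, ∀ x ≥ a, Metric.closedBall (x : ℂ) r ⊆ openSector θ := by
  have hsin : 0 < sin θ := sin_pos_of_pos_of_lt_pi hθ0 (by linarith [pi_pos])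
  refine ⟨a * sin θ / 4, by positivity, fun x hx => closedBall_subset_openSector hθ0 hθ ?_⟩
  have hr : 0 ≤ a * sin θ / 4 := by positivity
  nlinarith [mul_le_mul_of_nonneg_left hx hsin.le, mul_le_mul_of_nonneg_right (sin_le_one θ) hr]

section
variable {E : Type*} [NormedAddCommGroup E] [NormedSpace ℂ E] [CompleteSpace E]
  {F : ℂ → E} {U : Set ℂ}

theorem iteratedDeriv_comp_ofReal (hU : IsOpen U) (hF : DifferentiableOn ℂ F U) (n : ℕ)
    {x : ℝ} (hx : (x : ℂ) ∈ U) :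
    iteratedDeriv n (fun y : ℝ => F y) x = iteratedDeriv n F x := by
  induction n generalizing x with
  | zero => simp
  | succ n ih =>
    have hnhds : ∀ᶠ y : ℝ in nhds x, (y : ℂ) ∈ U :=
      Complex.continuous_ofReal.continuousAt.preimage_mem_nhds (hU.mem_nhds hx)
    have hderiv : DifferentiableAt ℂ (iteratedDeriv n F) x := by
      rw [iteratedDeriv_eq_iterate]
      exact ((hF.analyticOnNhd hU).iterated_deriv n x hx).differentiableAt
    rw [iteratedDeriv_succ, iteratedDeriv_succ,
      (Filter.eventuallyEq_of_mem hnhds fun y hy => ih hy).deriv_eq]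
    simpa [Function.comp_def] using (hderiv.hasDerivAt.scomp x Complex.ofRealCLM.hasDerivAt).deriv

theorem contDiffOn_comp_ofReal (hU : IsOpen U) (hF : DifferentiableOn ℂ F U) (n : WithTop ℕ∞) :
    ContDiffOn ℝ n (fun y : ℝ => F y) (Complex.ofReal ⁻¹' U) := fun x hx =>
  ((((hF.analyticOnNhd hU) x hx).contDiffAt.restrict_scalars ℝ).comp x
    Complex.ofRealCLM.contDiff.contDiffAt).contDiffWithinAt

theorem norm_iteratedDeriv_comp_ofReal_le (hU : IsOpen U) (hF : DifferentiableOn ℂ F U)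
    {M r x : ℝ} (hM : ∀ z ∈ U, ‖F z‖ ≤ M) (hr : 0 < r) (hball : Metric.closedBall (x : ℂ) r ⊆ U)
    (n : ℕ) : ‖iteratedDeriv n (fun y : ℝ => F y) x‖ ≤ n.factorial * M / r ^ n := by
  rw [iteratedDeriv_comp_ofReal hU hF n (hball (Metric.mem_closedBall_self hr.le))]
  exact Complex.norm_iteratedDeriv_le_of_forall_mem_sphere_norm_le n hr
    (hF.diffContOnCl_ball hball) fun z hz => hM z (hball (Metric.sphere_subset_closedBall hz))

end

section
variable {𝕜 : Type*} [NontriviallyNormedField 𝕜] {A : Type*} [NormedRing A] [NormedAlgebra 𝕜 A]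

theorem norm_iteratedDeriv_mul_le_of_isOpen {f g : 𝕜 → A} {s : Set 𝕜} {j : ℕ} (hs : IsOpen s)
    (hf : ContDiffOn 𝕜 j f s) (hg : ContDiffOn 𝕜 j g s) {x : 𝕜} (hx : x ∈ s) {a b : ℝ}
    (ha : ∀ i ≤ j, ‖iteratedDeriv i f x‖ ≤ a) (hb : ∀ i ≤ j, ‖iteratedDeriv i g x‖ ≤ b) :
    ‖iteratedDeriv j (fun y => f y * g y) x‖ ≤ 2 ^ j * a * b := by
  have hwithin : ∀ (h : 𝕜 → A) (i : ℕ),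
      ‖iteratedFDerivWithin 𝕜 i h s x‖ = ‖iteratedDeriv i h x‖ := fun h i => by
    rw [iteratedFDerivWithin_of_isOpen i hs hx, norm_iteratedFDeriv_eq_norm_iteratedDeriv]
  have ha0 : 0 ≤ a := (norm_nonneg _).trans (ha 0 (Nat.zero_le j))
  rw [← hwithin]
  refine (norm_iteratedFDerivWithin_mul_le hf hg hs.uniqueDiffOn hx le_rfl).trans ?_
  calc ∑ i ∈ Finset.range (j + 1), (j.choose i : ℝ) * ‖iteratedFDerivWithin 𝕜 i f s x‖ *
        ‖iteratedFDerivWithin 𝕜 (j - i) g s x‖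
      ≤ ∑ i ∈ Finset.range (j + 1), (j.choose i : ℝ) * a * b := by
        refine Finset.sum_le_sum fun i hi => ?_
        have hij : i ≤ j := Nat.lt_succ_iff.mp (Finset.mem_range.mp hi)
        rw [hwithin, hwithin]
        exact mul_le_mul (mul_le_mul_of_nonneg_left (ha i hij) (Nat.cast_nonneg _))
          (hb (j - i) (Nat.sub_le j i)) (norm_nonneg _) (by positivity)
    _ = 2 ^ j * a * b := by
        rw [← Finset.sum_mul, ← Finset.sum_mul, ← Nat.cast_sum, Nat.sum_range_choose]
        push_cast; ring

theorem support_iteratedDeriv_subset {F : Type*} [NormedAddCommGroup F] [NormedSpace 𝕜 F]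
    (f : 𝕜 → F) (n : ℕ) : Function.support (iteratedDeriv n f) ⊆ tsupport f := fun x hx => by
  rw [Function.mem_support, iteratedDeriv_eq_iteratedFDeriv] at hx
  exact support_iteratedFDeriv_subset n fun h => hx (by rw [h]; rfl)

theorem ContDiff.exists_forall_norm_iteratedDeriv_le {F : Type*} [NormedAddCommGroup F]
    [NormedSpace 𝕜 F] {f : 𝕜 → F} {k : ℕ} (hf : ContDiff 𝕜 k f) (hc : HasCompactSupport f) :
    ∃ A, ∀ i ≤ k, ∀ x, ‖iteratedDeriv i f x‖ ≤ A := by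
  obtain ⟨A, hA⟩ : BddAbove (⋃ i ∈ Set.Iic k, Set.range fun x => ‖iteratedFDeriv 𝕜 i f x‖) :=
    (Set.finite_Iic k).bddAbove_biUnion.mpr fun i hi =>
      (hf.continuous_iteratedFDeriv (mod_cast hi)).norm.bddAbove_range_of_hasCompactSupport
        (hc.iteratedFDeriv i).norm
  refine ⟨A, fun i hi x => ?_⟩
  rw [← norm_iteratedFDeriv_eq_norm_iteratedDeriv]
  exact hA (Set.mem_biUnion (Set.mem_Iic.mpr hi) (Set.mem_range_self x))

theorem ContDiff.mul_of_tsupport_subset {E : Type*} [NormedAddCommGroup E] [NormedSpace 𝕜 E]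
    {f g : E → A} {s : Set E} {n : WithTop ℕ∞} (hs : IsOpen s) (hf : ContDiff 𝕜 n f)
    (hg : ContDiffOn 𝕜 n g s) (hfs : tsupport f ⊆ s) : ContDiff 𝕜 n (fun x => f x * g x) := by
  refine contDiff_iff_contDiffAt.mpr fun x => ?_
  by_cases hx : x ∈ s
  · exact hf.contDiffAt.mul (hg.contDiffAt (hs.mem_nhds hx))
  · have hf0 : f =ᶠ[nhds x] 0 := notMem_tsupport_iff_eventuallyEq.mp fun h => hx (hfs h)
    exact (contDiffAt_const (c := 0)).congr_of_eventuallyEq (hf0.mono fun y hy => by simp [hy])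

end

theorem eLpNorm_le_of_support_subset {α F : Type*} [MeasurableSpace α] {μ : Measure α}
    [NormedAddCommGroup F] {p : ENNReal} {f : α → F} {s : Set α} (hs : MeasurableSet s)
    (hsf : Function.support f ⊆ s) {c : ℝ} (hc : ∀ x ∈ s, ‖f x‖ ≤ c) :
    eLpNorm f p μ ≤ μ s ^ p.toReal⁻¹ * ENNReal.ofReal c := by
  rw [← eLpNorm_restrict_eq_of_support_subset hsf, ← Measure.restrict_apply_univ]
  exact eLpNorm_le_of_ae_bound ((ae_restrict_iff' hs).mpr (Filter.Eventually.of_forall hc))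

theorem IsCompact.exists_gt_forall_le {α : Type*} [LinearOrder α] [TopologicalSpace α]
    [ClosedIicTopology α] [NoMaxOrder α] {K : Set α} {b : α} (hK : IsCompact K)
    (hKb : K ⊆ Set.Ioi b) : ∃ a > b, ∀ x ∈ K, a ≤ x := by
  rcases K.eq_empty_or_nonempty with rfl | hne
  · obtain ⟨a, ha⟩ := exists_gt b
    exact ⟨a, ha, by simp⟩
  · obtain ⟨a, haK, hmin⟩ := hK.exists_isMinOn hne continuousOn_id
    exact ⟨a, hKb haK, fun x hx => hmin hx⟩

theorem exists_eLpNorm_iteratedDeriv_mul_le_of_norm_le_on_openSector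
    (θ : ℝ) (hθ0 : 0 < θ) (hθ : θ ≤ π / 2) (k : ℕ)
    (η : ℝ → ℂ) (hη : ContDiff ℝ k η) (hηc : HasCompactSupport η)
    (hηsupp : tsupport η ⊆ Set.Ioi 0) :
    ∃ C : ℝ, 0 < C ∧
      ∀ M : ℝ, 0 ≤ M → ∀ F : ℂ → ℂ,
        (∀ z ∈ openSector θ, DifferentiableAt ℂ F z) →
        (∀ z ∈ openSector θ, ‖F z‖ ≤ M) →
        ∀ j : ℕ, j ≤ k →
          ContDiff ℝ k (fun s : ℝ => η s * F s)
          ∧ eLpNorm (iteratedDeriv j (fun s : ℝ => η s * F s)) 2 volume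
              ≤ ENNReal.ofReal (C * M) := by
  have hS : IsOpen (openSector θ) := isOpen_openSector (by linarith [pi_pos])
  have hsupp : tsupport η ⊆ Complex.ofReal ⁻¹' openSector θ := fun x hx =>
    ofReal_mem_openSector hθ0 (hηsupp hx)
  obtain ⟨a, ha0, haK⟩ := hηc.isCompact.exists_gt_forall_le hηsupp
  obtain ⟨r, hr0, hball⟩ := exists_pos_closedBall_subset_openSector hθ0 hθ ha0
  obtain ⟨A, hA⟩ := hη.exists_forall_norm_iteratedDeriv_le hηc
  obtain ⟨B, hB⟩ : BddAbove ((fun n : ℕ => n.factorial / r ^ n) '' Set.Iic k) :=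
    ((Set.finite_Iic k).image _).bddAbove
  have hA0 : 0 ≤ A := (norm_nonneg _).trans (hA 0 k.zero_le 0)
  have hB0 : 0 ≤ B := zero_le_one.trans (by simpa using hB (Set.mem_image_of_mem _ k.zero_le))
  set V := (volume (tsupport η) ^ (2⁻¹ : ℝ)).toReal
  refine ⟨max (2 ^ k * A * B * V) 1, lt_max_of_lt_right one_pos,
    fun M hM F hF hFM j hj => ?_⟩
  have hFS : DifferentiableOn ℂ F (openSector θ) := fun z hz => (hF z hz).differentiableWithinAt
  have hsopen : IsOpen (Complex.ofReal ⁻¹' openSector θ) := hS.preimage Complex.continuous_ofReal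
  have hpt : ∀ x ∈ tsupport η,
      ‖iteratedDeriv j (fun s : ℝ => η s * F s) x‖ ≤ 2 ^ k * A * B * M := fun x hx => by
    have hFderiv : ∀ i ≤ j, ‖iteratedDeriv i (fun s : ℝ => F s) x‖ ≤ B * M := fun i hi => by
      calc _ ≤ i.factorial * M / r ^ i :=
            norm_iteratedDeriv_comp_ofReal_le hS hFS hFM hr0 (hball x (haK x hx)) i
        _ = i.factorial / r ^ i * M := by ring
        _ ≤ B * M := by gcongr; exact hB (Set.mem_image_of_mem _ (hi.trans hj))
    calc _ ≤ 2 ^ j * A * (B * M) :=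
          norm_iteratedDeriv_mul_le_of_isOpen hsopen (hη.contDiffOn.of_le (mod_cast hj))
            (contDiffOn_comp_ofReal hS hFS j) (hsupp hx) (fun i hi => hA i (hi.trans hj) x)
            hFderiv
      _ ≤ 2 ^ k * A * B * M := by
          rw [← mul_assoc]; gcongr; exact one_le_two
  refine ⟨hη.mul_of_tsupport_subset hsopen (contDiffOn_comp_ofReal hS hFS k) hsupp, ?_⟩
  refine (eLpNorm_le_of_support_subset (isClosed_tsupport η).measurableSet
    ((support_iteratedDeriv_subset _ j).trans tsupport_mul_subset_left) hpt).trans ?_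
  have hV : volume (tsupport η) ^ (2 : ENNReal).toReal⁻¹ = ENNReal.ofReal V := by
    rw [ENNReal.ofReal_toReal (ENNReal.rpow_ne_top_of_nonneg (by norm_num)
      hηc.isCompact.measure_lt_top.ne)]
    norm_num
  rw [hV, ← ENNReal.ofReal_mul ENNReal.toReal_nonneg]
  refine ENNReal.ofReal_le_ofReal ?_
  calc V * (2 ^ k * A * B * M) = 2 ^ k * A * B * V * M := by ring
    _ ≤ max (2 ^ k * A * B * V) 1 * M := by gcongr; exact le_max_left _ _

theorem hormander_condition_of_bounded_holomorphic
    (θ : ℝ) (hθ0 : 0 < θ) (hθ : θ < π / 2) (k : ℕ)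
    (η : ℝ → ℂ) (hη : ContDiff ℝ (⊤ : ℕ∞) η) (hηc : HasCompactSupport η)
    (hηsupp : tsupport η ⊆ Set.Ioi (0 : ℝ)) :
    ∃ C : ℝ, 0 < C ∧
      ∀ M : ℝ, 0 ≤ M → ∀ F : ℂ → ℂ,
        (∀ z ∈ openSector θ, DifferentiableAt ℂ F z) →
        (∀ z ∈ openSector θ, ‖F z‖ ≤ M) →
        ∀ t : ℝ, 0 < t → ∀ j : ℕ, j ≤ k →
          ContDiff ℝ (k : ℕ∞) (fun s : ℝ => η s * F (((t * s : ℝ) : ℂ)))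
          ∧ eLpNorm (iteratedDeriv j (fun s : ℝ => η s * F (((t * s : ℝ) : ℂ)))) 2 volume
              ≤ ENNReal.ofReal (C * M) := by
  obtain ⟨C, hC, hbound⟩ := exists_eLpNorm_iteratedDeriv_mul_le_of_norm_le_on_openSector
    θ hθ0 hθ.le k η (hη.of_le (mod_cast le_top)) hηc hηsupp
  refine ⟨C, hC, fun M hM F hF hFM t ht j hj => ?_⟩
  have hdilate : ∀ z ∈ openSector θ, (t : ℂ) * z ∈ openSector θ := fun z hz =>
    ofReal_mul_mem_openSector ht hz
  obtain ⟨hG, hL2⟩ := hbound M hM (fun z => F (t * z))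
    (fun z hz => (hF _ (hdilate z hz)).comp z (differentiableAt_id.const_mul _))
    (fun z hz => hFM _ (hdilate z hz)) j hj
  simp only [Complex.ofReal_mul]
  exact ⟨mod_cast hG, hL2⟩
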